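/- arXiv:1612.07641 — 2 statements merged into one kernel-verified Lean document; each statement's English description precedes it below -/
import Mathlib

section
/- For every n ≥ 1, every permutation τ ∈ S_{2n}, and every partition λ of n, the number of pair partitions σ ∈ M_{2n} (viewed as permutations) such that the coset-type ρ(τ^{-1}σ) equals λ is C(λ); that is, left translation of the transversal M_{2n} by τ^{-1} does not change the distribution of coset-types. -/
open Equiv Finset

def pairInv (n : ℕ) : Fin (2*n) → Fin (2*n) :=
  fun x => ⟨2 * (x.val / 2) + (1 - x.val % 2), by omega⟩

lemma pairInv_involutive (n : ℕ) : Function.Involutive (pairInv n) := by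
  intro x
  apply Fin.ext
  simp only [pairInv]
  omega

/-- The graph Γ(σ): red edges {2k,2k+1} (0-indexed) and blue edges {σ(2k),σ(2k+1)}. -/
def gammaGraph {n : ℕ} (σ : Perm (Fin (2*n))) : SimpleGraph (Fin (2*n)) where
  Adj x y := x ≠ y ∧ (pairInv n x = y ∨ pairInv n (σ⁻¹ x) = σ⁻¹ y)
  symm := by
    refine ⟨?_⟩
    rintro x y ⟨hxy, h | h⟩
    · exact ⟨hxy.symm, Or.inl (by rw [← h, pairInv_involutive])⟩
    · exact ⟨hxy.symm, Or.inr (by rw [← h, pairInv_involutive])⟩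
  loopless := by constructor; rintro x ⟨hx, -⟩; exact hx rfl

instance {n : ℕ} (σ : Perm (Fin (2*n))) : DecidableRel (gammaGraph σ).Adj :=
  fun x y => inferInstanceAs (Decidable (x ≠ y ∧ (pairInv n x = y ∨ pairInv n (σ⁻¹ x) = σ⁻¹ y)))

/-- The coset-type of σ ∈ S_{2n}: the multiset of half-sizes of the connected
components of Γ(σ). -/
noncomputable def cosetType {n : ℕ} (σ : Perm (Fin (2*n))) : Multiset ℕ := by
  classical
  exact (Finset.univ : Finset (gammaGraph σ).ConnectedComponent).val.map
    (fun c => (Finset.univ.filter fun v => (gammaGraph σ).connectedComponentMk v = c).card / 2)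

/-- σ ∈ M_{2n}: the permutation (in one-line notation a₁ b₁ a₂ b₂ ⋯) of a pair partition,
i.e. σ(2k) < σ(2k+1) and σ(0) < σ(2) < ⋯ (0-indexed). -/
def isPairPerm {n : ℕ} (σ : Perm (Fin (2*n))) : Prop :=
  (∀ (k : ℕ) (h : k < n), σ ⟨2*k, by omega⟩ < σ ⟨2*k+1, by omega⟩) ∧
  (∀ (k : ℕ) (h : k+1 < n), σ ⟨2*k, by omega⟩ < σ ⟨2*k+2, by omega⟩)

/-- δ_I(σ) = 1 : the pair partition σ pairs only positions carrying equal values of I. -/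
def pairsEq {n : ℕ} {α : Type*} (I : Fin (2*n) → α) (σ : Perm (Fin (2*n))) : Prop :=
  ∀ (k : ℕ) (h : k < n), I (σ ⟨2*k, by omega⟩) = I (σ ⟨2*k+1, by omega⟩)

/-- C(λ): the number of pair partitions in M_{2n} with coset-type λ. -/
noncomputable def CC (n : ℕ) (lam : Multiset ℕ) : ℕ :=
  Nat.card {σ : Perm (Fin (2*n)) // isPairPerm σ ∧ cosetType σ = lam}

/-!
The pair permutations `M_{2n}` form a left transversal of the hyperoctahedral group `H_n`, the
centralizer of the involution `s` swapping `2i-1 ↔ 2i`: the coset `gH_n` is determined by the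
perfect matching `g s g⁻¹`, and every perfect matching is `σ s σ⁻¹` for exactly one pair
permutation `σ` (list its blocks by increasing minimum). The graph `Γ(g)` depends only on
`g s g⁻¹`, so the coset-type is constant on left cosets. Left multiplication by `τ⁻¹` permutes
the left cosets, so sending `σ ∈ M_{2n}` to the representative of `τ⁻¹ σ H_n` is a bijection of
`M_{2n}` under which `ρ(τ⁻¹ σ)` becomes the coset-type of the image.
-/

namespace Subgroup.IsComplement

variable {G α : Type*} [Group G] {S : Set G} {H : Subgroup G}

theorem natCard_mul_left_eq (hS : IsComplement S H) {f : G → α}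
    (hf : ∀ g, ∀ h ∈ H, f (g * h) = f g) (τ : G) (a : α) :
    Nat.card {g : G // g ∈ S ∧ f (τ * g) = a} = Nat.card {g : G // g ∈ S ∧ f g = a} := by
  let e : S ≃ S :=
    hS.leftQuotientEquiv.symm.trans ((MulAction.toPerm τ).trans hS.leftQuotientEquiv)
  have he : ∀ s : S, f (e s) = f (τ * s) := fun s => by
    have hcoset : (QuotientGroup.mk (τ * s) : G ⧸ H) = QuotientGroup.mk (e s : G) :=
      (hS.quotientGroupMk_leftQuotientEquiv _).symm
    have := hf (τ * s) _ (QuotientGroup.eq.mp hcoset)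
    rwa [mul_inv_cancel_left] at this
  calc Nat.card {g : G // g ∈ S ∧ f (τ * g) = a}
      = Nat.card {s : S // f (τ * s) = a} :=
        Nat.card_congr
          (Equiv.subtypeSubtypeEquivSubtypeInter (· ∈ S) (fun g => f (τ * g) = a)).symm
    _ = Nat.card {s : S // f s = a} := Nat.card_congr (e.subtypeEquiv fun s => by rw [he])
    _ = Nat.card {g : G // g ∈ S ∧ f g = a} :=
        Nat.card_congr (Equiv.subtypeSubtypeEquivSubtypeInter (· ∈ S) (f · = a))

end Subgroup.IsComplement

theorem two_mul_card_filter_lt_of_involutive {α : Type*} [Fintype α] [LinearOrder α]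
    {p : α → α} (hp : Function.Involutive p) (hfix : ∀ x, p x ≠ x) :
    2 * #{x | x < p x} = Fintype.card α := by
  have hswap : #{x | x < p x} = #{x | ¬ x < p x} := by
    refine Finset.card_nbij' p p ?_ ?_ (fun x _ => hp x) (fun x _ => hp x) <;>
      intro x hx <;> simp only [coe_filter, mem_univ, true_and, Set.mem_ofPred_eq, hp x] at hx ⊢
    · exact hx.le.not_gt
    · exact lt_of_le_of_ne (not_lt.mp hx) (hfix x)
  rw [← card_univ, ← card_filter_add_card_filter_not (s := univ) (fun x => x < p x), ← hswap,
    two_mul]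

theorem Fin.strictMono_of_lt_add_one {n : ℕ} {α : Type*} [Preorder α] {f : Fin n → α}
    (h : ∀ (k : ℕ) (hk : k + 1 < n), f ⟨k, by omega⟩ < f ⟨k + 1, hk⟩) : StrictMono f := by
  cases n with
  | zero => exact fun a => a.elim0
  | succ m => exact Fin.strictMono_iff_lt_succ.mpr fun i => h i (by omega)

theorem Fin.exists_eq_two_mul_or {n : ℕ} (x : Fin (2*n)) :
    ∃ k, ∃ hk : k < n, x = ⟨2*k, by omega⟩ ∨ x = ⟨2*k+1, by omega⟩ := by
  refine ⟨x / 2, by omega, ?_⟩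
  rcases Nat.mod_two_eq_zero_or_one x with h | h
  · exact .inl (Fin.ext (by simp only; omega))
  · exact .inr (Fin.ext (by simp only; omega))

section PairPerms

variable {n : ℕ}

theorem pairInv_two_mul (k : ℕ) (hk : k < n) :
    pairInv n ⟨2*k, by omega⟩ = ⟨2*k+1, by omega⟩ :=
  Fin.ext (show 2*((2*k)/2) + (1 - (2*k) % 2) = 2*k+1 by omega)

theorem pairInv_two_mul_add_one (k : ℕ) (hk : k < n) :
    pairInv n ⟨2*k+1, by omega⟩ = ⟨2*k, by omega⟩ :=
  Fin.ext (show 2*((2*k+1)/2) + (1 - (2*k+1) % 2) = 2*k by omega)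

theorem pairInv_ne (x : Fin (2*n)) : pairInv n x ≠ x := by
  intro h
  have := congrArg Fin.val h
  simp only [pairInv] at this
  omega

def pairSwap (n : ℕ) : Perm (Fin (2*n)) := (pairInv_involutive n).toPerm _

theorem pairSwap_apply (x : Fin (2*n)) : pairSwap n x = pairInv n x := rfl

def hyperoctahedral (n : ℕ) : Subgroup (Perm (Fin (2*n))) :=
  Subgroup.centralizer {pairSwap n}

theorem inv_mul_mem_hyperoctahedral_iff {g g' : Perm (Fin (2*n))} :
    g⁻¹ * g' ∈ hyperoctahedral n ↔ g * pairSwap n * g⁻¹ = g' * pairSwap n * g'⁻¹ := by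
  rw [hyperoctahedral, Subgroup.mem_centralizer_singleton_iff, ← mul_inv_eq_iff_eq_mul,
    mul_inv_rev, inv_inv]
  constructor <;> intro h
  · calc g * pairSwap n * g⁻¹ = g * (g⁻¹ * g' * pairSwap n * (g'⁻¹ * g)) * g⁻¹ := by rw [h]
      _ = g' * pairSwap n * g'⁻¹ := by group
  · calc g⁻¹ * g' * pairSwap n * (g'⁻¹ * g) = g⁻¹ * (g' * pairSwap n * g'⁻¹) * g := by group
      _ = pairSwap n := by rw [← h]; group

theorem gammaGraph_adj_iff (σ : Perm (Fin (2*n))) {x y : Fin (2*n)} :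
    (gammaGraph σ).Adj x y ↔ x ≠ y ∧ (pairSwap n x = y ∨ (σ * pairSwap n * σ⁻¹) x = y) := by
  simp only [gammaGraph, pairSwap_apply, Perm.mul_apply, ← Perm.eq_inv_iff_eq]

theorem cosetType_congr {σ σ' : Perm (Fin (2*n))} (h : gammaGraph σ = gammaGraph σ') :
    cosetType σ = cosetType σ' := by
  unfold cosetType
  congr!

theorem cosetType_mul_of_mem {σ h : Perm (Fin (2*n))} (hh : h ∈ hyperoctahedral n) :
    cosetType (σ * h) = cosetType σ := by
  have hconj := (inv_mul_mem_hyperoctahedral_iff (g := σ) (g' := σ * h)).mp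
    (by rwa [inv_mul_cancel_left])
  refine cosetType_congr (SimpleGraph.ext ?_)
  ext x y
  simp only [gammaGraph_adj_iff, hconj]

theorem involutive_conj_pairSwap (g : Perm (Fin (2*n))) :
    Function.Involutive (g * pairSwap n * g⁻¹) := by
  intro x
  simp [pairSwap_apply, pairInv_involutive n _]

theorem conj_pairSwap_apply_ne (g : Perm (Fin (2*n))) (x : Fin (2*n)) :
    (g * pairSwap n * g⁻¹) x ≠ x := by
  simp [pairSwap_apply, ← Perm.eq_inv_iff_eq, pairInv_ne]

section Construction

variable {p : Perm (Fin (2*n))}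

theorem card_filter_lt_apply (hp : Function.Involutive p) (hfix : ∀ x, p x ≠ x) :
    #{x | x < p x} = n := by
  have := two_mul_card_filter_lt_of_involutive hp hfix
  rw [Fintype.card_fin] at this
  omega

/-- `k ↦ a_{k+1}`: the minima of the blocks of `p`, in increasing order. -/
noncomputable def blockMin (hp : Function.Involutive p) (hfix : ∀ x, p x ≠ x) :
    Fin n ↪o Fin (2*n) :=
  ({x | x < p x} : Finset _).orderEmbOfFin (card_filter_lt_apply hp hfix)

theorem blockMin_lt_apply (hp : Function.Involutive p) (hfix : ∀ x, p x ≠ x) (k : Fin n) :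
    blockMin hp hfix k < p (blockMin hp hfix k) :=
  (mem_filter.mp (orderEmbOfFin_mem _ (card_filter_lt_apply hp hfix) k)).2

theorem blockMin_ne_apply_blockMin (hp : Function.Involutive p) (hfix : ∀ x, p x ≠ x)
    (j k : Fin n) : blockMin hp hfix j ≠ p (blockMin hp hfix k) := by
  intro h
  have hj := blockMin_lt_apply hp hfix j
  rw [h, hp] at hj
  exact (blockMin_lt_apply hp hfix k).not_gt hj

noncomputable def pairPermFun (hp : Function.Involutive p) (hfix : ∀ x, p x ≠ x)
    (x : Fin (2*n)) : Fin (2*n) :=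
  if x.val % 2 = 0 then blockMin hp hfix ⟨x / 2, by omega⟩
  else p (blockMin hp hfix ⟨x / 2, by omega⟩)

theorem pairPermFun_two_mul (hp : Function.Involutive p) (hfix : ∀ x, p x ≠ x)
    (k : ℕ) (hk : k < n) : pairPermFun hp hfix ⟨2*k, by omega⟩ = blockMin hp hfix ⟨k, hk⟩ := by
  simp only [pairPermFun, Nat.mul_mod_right, if_true]
  congr 2
  omega

theorem pairPermFun_two_mul_add_one (hp : Function.Involutive p) (hfix : ∀ x, p x ≠ x)
    (k : ℕ) (hk : k < n) :
    pairPermFun hp hfix ⟨2*k+1, by omega⟩ = p (blockMin hp hfix ⟨k, hk⟩) := by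
  simp only [pairPermFun, show (2*k+1) % 2 ≠ 0 by omega, if_false]
  congr 3
  omega

theorem pairPermFun_injective (hp : Function.Involutive p) (hfix : ∀ x, p x ≠ x) :
    Function.Injective (pairPermFun hp hfix) := by
  intro x y hxy
  obtain ⟨k, hk, rfl | rfl⟩ := Fin.exists_eq_two_mul_or x <;>
  obtain ⟨j, hj, rfl | rfl⟩ := Fin.exists_eq_two_mul_or y <;>
  simp only [pairPermFun_two_mul, pairPermFun_two_mul_add_one, hk, hj] at hxy
  · simpa using (blockMin hp hfix).injective hxy
  · exact absurd hxy (blockMin_ne_apply_blockMin hp hfix _ _)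
  · exact absurd hxy.symm (blockMin_ne_apply_blockMin hp hfix _ _)
  · simpa using (blockMin hp hfix).injective (hp.injective hxy)

/-- The pair permutation `a_1 b_1 ⋯ a_n b_n` of the perfect matching `p`. -/
noncomputable def pairPermOf (hp : Function.Involutive p) (hfix : ∀ x, p x ≠ x) :
    Perm (Fin (2*n)) :=
  .ofBijective _ (Finite.injective_iff_bijective.mp (pairPermFun_injective hp hfix))

theorem pairPermOf_apply (hp : Function.Involutive p) (hfix : ∀ x, p x ≠ x) (x : Fin (2*n)) :
    pairPermOf hp hfix x = pairPermFun hp hfix x := rfl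

theorem isPairPerm_pairPermOf (hp : Function.Involutive p) (hfix : ∀ x, p x ≠ x) :
    isPairPerm (pairPermOf hp hfix) := by
  refine ⟨fun k hk => ?_, fun k hk => ?_⟩
  · simp only [pairPermOf_apply, pairPermFun_two_mul, pairPermFun_two_mul_add_one, hk]
    exact blockMin_lt_apply hp hfix _
  · have h2 : (⟨2*k+2, by omega⟩ : Fin (2*n)) = ⟨2*(k+1), by omega⟩ := rfl
    simp only [pairPermOf_apply, h2, pairPermFun_two_mul, hk, (show k < n by omega)]
    exact (blockMin hp hfix).strictMono (Fin.mk_lt_mk.mpr k.lt_add_one)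

theorem pairPermOf_mul_pairSwap (hp : Function.Involutive p) (hfix : ∀ x, p x ≠ x) :
    pairPermOf hp hfix * pairSwap n = p * pairPermOf hp hfix := by
  ext1 x
  obtain ⟨k, hk, rfl | rfl⟩ := Fin.exists_eq_two_mul_or x <;>
  simp only [Perm.mul_apply, pairSwap_apply, pairInv_two_mul, pairInv_two_mul_add_one,
    pairPermOf_apply, pairPermFun_two_mul, pairPermFun_two_mul_add_one, hk, hp _]

end Construction

theorem pairPermOf_conj_pairSwap {σ : Perm (Fin (2*n))} (hσ : isPairPerm σ) :
    pairPermOf (involutive_conj_pairSwap σ) (conj_pairSwap_apply_ne σ) = σ := by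
  have hpartner : ∀ k (hk : k < n),
      (σ * pairSwap n * σ⁻¹) (σ ⟨2*k, by omega⟩) = σ ⟨2*k+1, by omega⟩ := fun k hk => by
    simp only [Perm.mul_apply, Perm.inv_def, symm_apply_apply, pairSwap_apply,
      pairInv_two_mul k hk]
  have hblockMin : ⇑(blockMin (involutive_conj_pairSwap σ) (conj_pairSwap_apply_ne σ)) =
      fun k : Fin n => σ ⟨2*k, by omega⟩ :=
    (orderEmbOfFin_unique _
      (fun k => mem_filter.mpr ⟨mem_univ _, by rw [hpartner k k.2]; exact hσ.1 k k.2⟩)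
      (Fin.strictMono_of_lt_add_one fun k hk => hσ.2 k hk)).symm
  ext1 x
  obtain ⟨k, hk, rfl | rfl⟩ := Fin.exists_eq_two_mul_or x <;>
  simp [pairPermOf_apply, pairPermFun_two_mul, pairPermFun_two_mul_add_one, hk, hblockMin,
    hpartner]

theorem isComplement_pairPerms :
    Subgroup.IsComplement {σ | isPairPerm σ} (hyperoctahedral n : Set (Perm (Fin (2*n)))) := by
  refine Subgroup.isComplement_iff_existsUnique_inv_mul_mem.mpr fun g => ⟨⟨_,
    isPairPerm_pairPermOf (involutive_conj_pairSwap g) (conj_pairSwap_apply_ne g)⟩, ?_, ?_⟩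
  · show _ ∈ hyperoctahedral n
    rw [inv_mul_mem_hyperoctahedral_iff, pairPermOf_mul_pairSwap, mul_inv_cancel_right]
  · rintro ⟨σ, hσ⟩ hσg
    rw [Subtype.mk.injEq, ← pairPermOf_conj_pairSwap hσ]
    simp_rw [inv_mul_mem_hyperoctahedral_iff.mp hσg]

end PairPerms

theorem stmt2_general (n : ℕ) (τ : Perm (Fin (2*n))) (lam : Nat.Partition n) :
    Nat.card {σ : Perm (Fin (2*n)) // isPairPerm σ ∧ cosetType (τ⁻¹ * σ) = lam.parts} =
      CC n lam.parts :=
  isComplement_pairPerms.natCard_mul_left_eq (fun _ _ => cosetType_mul_of_mem) τ⁻¹ lam.parts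

/-- For every n ≥ 1, every τ ∈ S_{2n} and every partition λ of n, the number of pair
partitions σ ∈ M_{2n} with ρ(τ⁻¹σ) = λ equals C(λ): left translation of the transversal
M_{2n} by τ⁻¹ does not change the distribution of coset-types. -/
theorem stmt2 (n : ℕ) (hn : 1 ≤ n) (τ : Perm (Fin (2*n))) (lam : Nat.Partition n) :
    Nat.card {σ : Perm (Fin (2*n)) // isPairPerm σ ∧ cosetType (τ⁻¹ * σ) = lam.parts} =
      CC n lam.parts :=
  stmt2_general n τ lam
end

section
/- Let d, n ≥ 1 and let I = (i_1,…,i_n), I' = (i'_1,…,i'_n), J = (j_1,…,j_n), J' = (j'_1,…,j'_n) be lists with entries in {1,…,d}. Set c = i_1, let P = {p ∈ {1,…,n} : i'_p = c}, and suppose v ∈ {1,…,d} is a value occurring in neither I nor I'. For p ∈ P, let I(p) be the list I with its first entry replaced by v, and let I'(p) be the list I' with its p-th entry replaced by v. Then ∫_{U(d)} ∏_{k=1}^n g_{i_k j_k} ∏_{k=1}^n ḡ_{i'_k j'_k} dg = Σ_{p∈P} ∫_{U(d)} ∏_{k=1}^n g_{I(p)_k, j_k} ∏_{k=1}^n ḡ_{I'(p)_k,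 j'_k} dg. -/
/-!
Write `⟨I, I'⟩` for `∫ ∏ₖ g_{I k, J k} ∏ₖ conj g_{I' k, J' k} dg`. Left-invariance of Haar
measure makes `t ↦ ∫ f (exp (t X) * g) dg` constant for every skew-Hermitian `X`, so its
derivative at `0` vanishes. For the monomial integrand this derivative is
`∑ₖ ∑_c X_{I k, c} ⟨I[k ↦ c], I'⟩ + ∑ₖ ∑_c conj X_{I' k, c} ⟨I, I'[k ↦ c]⟩`, and `Xᴴ = -X` turns
the second sum into a `ℂ`-linear expression in `X` as well. Skew-Hermitian matrices span all
matrices over `ℂ`, so the resulting identity holds for the matrix unit `E_ab`, where it reads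
`∑_{k : I k = a} ⟨I[k ↦ b], I'⟩ = ∑_{p : I' p = b} ⟨I, I'[p ↦ a]⟩`. The theorem is the case
`a = v`, `b = I 0` applied to `I[0 ↦ v]`: as `v` does not occur in `I`, the left side is `⟨I, I'⟩`.
-/

open MeasureTheory Finset

noncomputable instance (d : ℕ) : MeasurableSpace (Matrix.unitaryGroup (Fin d) ℂ) :=
  borel _

instance (d : ℕ) : BorelSpace (Matrix.unitaryGroup (Fin d) ℂ) := ⟨rfl⟩

theorem hasDerivAt_integral_of_continuous_of_compactSpace {X E : Type*} [TopologicalSpace X]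
    [CompactSpace X] [MeasurableSpace X] [OpensMeasurableSpace X] [NormedAddCommGroup E]
    [NormedSpace ℝ E] [SecondCountableTopologyEither X E] (μ : Measure X) [IsFiniteMeasure μ]
    {F F' : ℝ → X → E} (hF : ∀ t, Continuous (F t)) (hF' : Continuous (Function.uncurry F'))
    (hderiv : ∀ t x, HasDerivAt (F · x) (F' t x) t) (t₀ : ℝ) :
    HasDerivAt (fun t => ∫ x, F t x ∂μ) (∫ x, F' t₀ x ∂μ) t₀ := by
  obtain ⟨C, hC⟩ :=
    ((isCompact_closedBall t₀ 1).prod isCompact_univ).exists_bound_of_continuousOn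
      hF'.continuousOn
  refine (hasDerivAt_integral_of_dominated_loc_of_deriv_le (bound := fun _ => C)
    (Metric.ball_mem_nhds t₀ one_pos) (.of_forall fun t => (hF t).aestronglyMeasurable)
    ((hF t₀).integrable_of_hasCompactSupport (.of_compactSpace _))
    (hF'.uncurry_left t₀).aestronglyMeasurable
    (.of_forall fun x t ht => hC (t, x) ⟨Metric.ball_subset_closedBall ht, Set.mem_univ x⟩)
    (integrable_const C) (.of_forall fun x t _ => hderiv t x)).2

theorem integral_eq_zero_of_hasDerivAt_mul_left {G E : Type*} [Group G] [TopologicalSpace G]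
    [ContinuousMul G] [CompactSpace G] [MeasurableSpace G] [OpensMeasurableSpace G]
    [MeasurableMul G] [NormedAddCommGroup E] [NormedSpace ℝ E] [SecondCountableTopologyEither G E]
    (μ : Measure G) [μ.IsMulLeftInvariant] [IsFiniteMeasure μ] (γ : ℝ → G) {f : G → E}
    (hf : Continuous f) {f' : ℝ → G → E} (hf' : Continuous (Function.uncurry f'))
    (hderiv : ∀ t g, HasDerivAt (fun s => f (γ s * g)) (f' t g) t) (t₀ : ℝ) :
    ∫ g, f' t₀ g ∂μ = 0 := by
  have hD := hasDerivAt_integral_of_continuous_of_compactSpace μ (F := fun t g => f (γ t * g))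
    (fun t => hf.comp (continuous_const_mul (γ t))) hf' hderiv t₀
  simp only [integral_mul_left_eq_self f] at hD
  exact hD.unique (hasDerivAt_const t₀ _)

theorem LinearMap.eq_of_forall_mem_skewAdjoint {A V : Type*} [AddCommGroup A] [Module ℂ A]
    [StarAddMonoid A] [StarModule ℂ A] [AddCommGroup V] [Module ℂ V] (L K : A →ₗ[ℂ] V)
    (h : ∀ x ∈ skewAdjoint A, L x = K x) (a : A) : L a = K a := by
  have hsub : a - star a ∈ skewAdjoint A := by
    simp [skewAdjoint.mem_iff]
  have hadd : Complex.I • (a + star a) ∈ skewAdjoint A := by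
    simp [skewAdjoint.mem_iff, star_smul, add_comm]
  have ha :
      a = (2 : ℂ)⁻¹ • (a - star a) + (-Complex.I / 2) • (Complex.I • (a + star a)) := by
    rw [smul_smul, div_mul_eq_mul_div, neg_mul, Complex.I_mul_I]
    module
  obtain ⟨x, hx, y, hy, rfl⟩ : ∃ x ∈ skewAdjoint A, ∃ y ∈ skewAdjoint A,
      a = (2 : ℂ)⁻¹ • x + (-Complex.I / 2) • y := ⟨_, hsub, _, hadd, ha⟩
  rw [map_add, map_smul, map_smul, map_add, map_smul, map_smul, h x hx, h y hy]

theorem Finset.prod_apply_update {ι α β : Type*} [Fintype ι] [DecidableEq ι] [CommMonoid β]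
    (f : ι → α → β) (I : ι → α) (k : ι) (c : α) :
    ∏ j, f j (Function.update I k c j) = f k c * ∏ j ∈ univ.erase k, f j (I j) := by
  simp only [Function.apply_update f, prod_update_of_mem (mem_univ k), sdiff_singleton_eq_erase]

namespace Matrix

open scoped Matrix

instance UnitaryGroup.compactSpace {𝕜 n : Type*} [RCLike 𝕜] [Fintype n] [DecidableEq n] :
    CompactSpace (unitaryGroup n 𝕜) := by
  have hclosed : IsClosed (unitaryGroup n 𝕜 : Set (Matrix n n 𝕜)) := isClosed_unitary
  open scoped Matrix.Norms.Elementwise in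
  refine isCompact_iff_compactSpace.mp (Metric.isCompact_of_isClosed_isBounded hclosed ?_)
  exact (Metric.isBounded_iff_subset_closedBall 0).2
    ⟨1, fun U hU => by simpa using entrywise_sup_norm_bound_of_unitary hU⟩

section Exp

variable {m : Type*} [Fintype m] [DecidableEq m]

theorem exp_smul_mem_unitaryGroup {X : Matrix m m ℂ} (hX : Xᴴ = -X) (t : ℝ) :
    NormedSpace.exp (t • X) ∈ unitaryGroup m ℂ := by
  rw [mem_unitaryGroup_iff, star_eq_conjTranspose, ← exp_conjTranspose, conjTranspose_smul, hX,
    star_trivial, smul_neg, ← exp_add_of_commute _ _ (Commute.neg_right (Commute.refl (t • X))),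
    add_neg_cancel, NormedSpace.exp_zero]

theorem continuous_exp_smul (X : Matrix m m ℂ) :
    Continuous fun t : ℝ => NormedSpace.exp (t • X) := by
  open scoped Matrix.Norms.Operator in
  exact (differentiable_exp_smul_const ℝ X).continuous

theorem hasDerivAt_exp_smul_mul_apply (X M : Matrix m m ℂ) (a b : m) (t : ℝ) :
    HasDerivAt (fun s : ℝ => (NormedSpace.exp (s • X) * M) a b)
      ((NormedSpace.exp (t • X) * X * M) a b) t := by
  open scoped Matrix.Norms.Operator in
  exact (entryLinearMap ℝ ℂ a b).toContinuousLinearMap.hasFDerivAt.comp_hasDerivAt t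
    ((hasDerivAt_exp_smul_const X t).mul_const M)

end Exp

variable {m ι : Type*} [Fintype ι]

def entryMonomial (I J I' J' : ι → m) (M : Matrix m m ℂ) : ℂ :=
  (∏ k, M (I k) (J k)) * ∏ k, starRingEnd ℂ (M (I' k) (J' k))

theorem continuous_entryMonomial (I J I' J' : ι → m) : Continuous (entryMonomial I J I' J') := by
  unfold entryMonomial; fun_prop

theorem integrable_entryMonomial [Fintype m] [DecidableEq m]
    [MeasurableSpace (unitaryGroup m ℂ)] [OpensMeasurableSpace (unitaryGroup m ℂ)]
    (I J I' J' : ι → m) (μ : Measure (unitaryGroup m ℂ)) [IsFiniteMeasure μ] :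
    Integrable (fun g : unitaryGroup m ℂ => entryMonomial I J I' J' g) μ :=
  ((continuous_entryMonomial I J I' J').comp continuous_subtype_val).integrable_of_hasCompactSupport
    (.of_compactSpace _)

variable [DecidableEq ι]

def entryMonomialDeriv (I J I' J' : ι → m) (M N : Matrix m m ℂ) : ℂ :=
  (∑ k, (∏ j ∈ univ.erase k, M (I j) (J j)) * N (I k) (J k)) *
      ∏ k, starRingEnd ℂ (M (I' k) (J' k)) +
    (∏ k, M (I k) (J k)) *
      ∑ k, (∏ j ∈ univ.erase k, starRingEnd ℂ (M (I' j) (J' j))) *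
        starRingEnd ℂ (N (I' k) (J' k))

variable (I J I' J' : ι → m)

theorem _root_.Continuous.entryMonomialDeriv {X : Type*} [TopologicalSpace X]
    {M N : X → Matrix m m ℂ} (hM : Continuous M) (hN : Continuous N) :
    Continuous fun x => entryMonomialDeriv I J I' J' (M x) (N x) := by
  unfold Matrix.entryMonomialDeriv; fun_prop

theorem hasDerivAt_entryMonomial {M : ℝ → Matrix m m ℂ} {N : Matrix m m ℂ} {t : ℝ}
    (hM : ∀ a b, HasDerivAt (fun s => M s a b) (N a b) t) :
    HasDerivAt (fun s => entryMonomial I J I' J' (M s))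
      (entryMonomialDeriv I J I' J' (M t) N) t := by
  have h₁ := HasDerivAt.finsetProd (u := univ) fun k _ => hM (I k) (J k)
  have h₂ := HasDerivAt.finsetProd (u := univ) fun k _ => (hM (I' k) (J' k)).star
  simp only [smul_eq_mul, Finset.prod_fn] at h₁ h₂
  exact h₁.mul h₂

variable [Fintype m]

theorem entryMonomialDeriv_mul_left (X M : Matrix m m ℂ) :
    entryMonomialDeriv I J I' J' M (X * M) =
      ∑ k, ∑ c, X (I k) c * entryMonomial (Function.update I k c) J I' J' M +
        ∑ k, ∑ c, Xᴴ c (I' k) * entryMonomial I J (Function.update I' k c) J' M := by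
  simp only [entryMonomialDeriv, entryMonomial, mul_apply, conjTranspose_apply, map_sum, map_mul,
    Finset.prod_apply_update (fun j a => M a (J j)),
    Finset.prod_apply_update (fun j a => starRingEnd ℂ (M a (J' j))), mul_sum, sum_mul,
    RCLike.star_def]
  congr 1 <;> refine sum_congr rfl fun k _ => sum_congr rfl fun c _ => by ring

variable [DecidableEq m] [MeasurableSpace (unitaryGroup m ℂ)]
  [BorelSpace (unitaryGroup m ℂ)] (μ : Measure (unitaryGroup m ℂ)) [μ.IsMulLeftInvariant]
  [IsFiniteMeasure μ]

theorem integral_entryMonomialDeriv_mul_left_eq_zero {X : Matrix m m ℂ} (hX : Xᴴ = -X) :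
    ∫ g : unitaryGroup m ℂ, entryMonomialDeriv I J I' J' g (X * g) ∂μ = 0 := by
  have hexp : Continuous fun p : ℝ × unitaryGroup m ℂ => NormedSpace.exp (p.1 • X) :=
    (continuous_exp_smul X).comp continuous_fst
  have hg : Continuous fun p : ℝ × unitaryGroup m ℂ => (p.2 : Matrix m m ℂ) :=
    continuous_subtype_val.comp continuous_snd
  have hf' : Continuous fun p : ℝ × unitaryGroup m ℂ => entryMonomialDeriv I J I' J'
      (NormedSpace.exp (p.1 • X) * p.2) (NormedSpace.exp (p.1 • X) * X * p.2) :=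
    (hexp.matrix_mul hg).entryMonomialDeriv I J I' J'
      ((hexp.matrix_mul continuous_const).matrix_mul hg)
  have hzero := integral_eq_zero_of_hasDerivAt_mul_left μ
    (fun t => ⟨NormedSpace.exp (t • X), exp_smul_mem_unitaryGroup hX t⟩)
    ((continuous_entryMonomial I J I' J').comp continuous_subtype_val)
    (f' := fun t g => entryMonomialDeriv I J I' J' (NormedSpace.exp (t • X) * g)
      (NormedSpace.exp (t • X) * X * g))
    hf' (fun t g => hasDerivAt_entryMonomial I J I' J' fun a b =>
      hasDerivAt_exp_smul_mul_apply X g a b t) 0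
  simpa only [zero_smul, NormedSpace.exp_zero, one_mul] using hzero

theorem sum_sum_mul_integral_entryMonomial_update_eq {X : Matrix m m ℂ} (hX : Xᴴ = -X) :
    ∑ k, ∑ c, X (I k) c * ∫ g : unitaryGroup m ℂ,
        entryMonomial (Function.update I k c) J I' J' g ∂μ =
      ∑ k, ∑ c, X c (I' k) * ∫ g : unitaryGroup m ℂ,
        entryMonomial I J (Function.update I' k c) J' g ∂μ := by
  have h := integral_entryMonomialDeriv_mul_left_eq_zero I J I' J' μ hX
  simp only [entryMonomialDeriv_mul_left, hX, neg_apply, neg_mul, sum_neg_distrib,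
    ← sub_eq_add_neg] at h
  have hint : ∀ (R R' : ι → m) (x : ℂ),
      Integrable (fun g : unitaryGroup m ℂ => x * entryMonomial R J R' J' g) μ :=
    fun R R' x => (integrable_entryMonomial R J R' J' μ).const_mul x
  rw [integral_sub (integrable_finsetSum _ fun k _ => integrable_finsetSum _ fun c _ => hint _ _ _)
      (integrable_finsetSum _ fun k _ => integrable_finsetSum _ fun c _ => hint _ _ _),
    sub_eq_zero, integral_finsetSum _ fun k _ => integrable_finsetSum _ fun c _ => hint _ _ _,
    integral_finsetSum _ fun k _ => integrable_finsetSum _ fun c _ => hint _ _ _] at h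
  simpa only [integral_finsetSum _ fun c _ => hint _ _ _, integral_const_mul] using h

theorem sum_integral_entryMonomial_update_eq (a b : m) :
    ∑ k ∈ univ.filter (I · = a), ∫ g : unitaryGroup m ℂ,
        entryMonomial (Function.update I k b) J I' J' g ∂μ =
      ∑ p ∈ univ.filter (I' · = b), ∫ g : unitaryGroup m ℂ,
        entryMonomial I J (Function.update I' p a) J' g ∂μ := by
  let L : Matrix m m ℂ →ₗ[ℂ] ℂ := ∑ k, ∑ c,
    (∫ g : unitaryGroup m ℂ, entryMonomial (Function.update I k c) J I' J' g ∂μ) •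
      entryLinearMap ℂ ℂ (I k) c
  let K : Matrix m m ℂ →ₗ[ℂ] ℂ := ∑ k, ∑ c,
    (∫ g : unitaryGroup m ℂ, entryMonomial I J (Function.update I' k c) J' g ∂μ) •
      entryLinearMap ℂ ℂ c (I' k)
  have hLK := L.eq_of_forall_mem_skewAdjoint K (fun X hX => by
    simpa [L, K, mul_comm] using
      sum_sum_mul_integral_entryMonomial_update_eq I J I' J' μ (skewAdjoint.mem_iff.1 hX))
    (single a b 1)
  simpa [L, K, single_apply, sum_filter, ite_and, eq_comm] using hLK

end Matrix

open Classical in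
theorem stmt12_general (d n : ℕ) (hn : 0 < n)
    (I I' J J' : Fin n → Fin d) (v : Fin d)
    (hv : ∀ k, I k ≠ v ∧ I' k ≠ v)
    (μ : Measure (Matrix.unitaryGroup (Fin d) ℂ)) [μ.IsHaarMeasure]
    [IsProbabilityMeasure μ] :
    ∫ g, (∏ k, (g : Matrix (Fin d) (Fin d) ℂ) (I k) (J k)) *
        ∏ k, starRingEnd ℂ ((g : Matrix (Fin d) (Fin d) ℂ) (I' k) (J' k)) ∂μ =
      ∑ p ∈ Finset.univ.filter (fun p => I' p = I ⟨0, hn⟩),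
        ∫ g, (∏ k, (g : Matrix (Fin d) (Fin d) ℂ)
                (Function.update I ⟨0, hn⟩ v k) (J k)) *
          ∏ k, starRingEnd ℂ ((g : Matrix (Fin d) (Fin d) ℂ)
                (Function.update I' p v k) (J' k)) ∂μ := by
  have hfirst : univ.filter (Function.update I ⟨0, hn⟩ v · = v) = {⟨0, hn⟩} := by
    ext k
    by_cases hk : k = ⟨0, hn⟩
    · simp [hk]
    · simp [hk, (hv k).1]
  have h := Matrix.sum_integral_entryMonomial_update_eq (Function.update I ⟨0, hn⟩ v) J I' J' μ
    v (I ⟨0, hn⟩)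
  rwa [hfirst, sum_singleton, Function.update_idem, Function.update_eq_self] at h

open Classical in
/-- One step of the list-reduction algorithm for the unitary group: with c = i₁,
P = {p : i'_p = c}, and v a value occurring in neither I nor I', replacing (for each
p ∈ P) the first entry of I and the p-th entry of I' by v,
∫ ∏ g_{i_k j_k} ∏ ḡ_{i'_k j'_k} = Σ_{p∈P} ∫ ∏ g_{I(p)_k j_k} ∏ ḡ_{I'(p)_k j'_k}. -/
theorem stmt12 (d n : ℕ) (hd : 0 < d) (hn : 0 < n)
    (I I' J J' : Fin n → Fin d) (v : Fin d)
    (hv : ∀ k, I k ≠ v ∧ I' k ≠ v)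
    (μ : Measure (Matrix.unitaryGroup (Fin d) ℂ)) [μ.IsHaarMeasure]
    [IsProbabilityMeasure μ] :
    ∫ g, (∏ k, (g : Matrix (Fin d) (Fin d) ℂ) (I k) (J k)) *
        ∏ k, starRingEnd ℂ ((g : Matrix (Fin d) (Fin d) ℂ) (I' k) (J' k)) ∂μ =
      ∑ p ∈ Finset.univ.filter (fun p => I' p = I ⟨0, hn⟩),
        ∫ g, (∏ k, (g : Matrix (Fin d) (Fin d) ℂ)
                (Function.update I ⟨0, hn⟩ v k) (J k)) *
          ∏ k, starRingEnd ℂ ((g : Matrix (Fin d) (Fin d) ℂ)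
                (Function.update I' p v k) (J' k)) ∂μ :=
  stmt12_general d n hn I I' J J' v hv μ
end
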